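/- arXiv:1805.09068 — 2 statements merged into one kernel-verified Lean document; each statement's English description precedes it below -/
import Mathlib

section
/- Verification lemma with an additional VaR constraint: Let ξ be a positive integrable random variable, X₀ > 0, L > 0, β ∈ (0,1), and G : [0,∞) → ℝ measurable. Suppose λ > 0, λ₂ ≥ 0, and X* ≥ 0 satisfy: (a) G(X*(ω)) - λξ(ω)X*(ω) - λ₂𝟙_{X*(ω) < L} = sup_{x≥0}(G(x) - λξ(ω)x - λ₂𝟙_{x<L}) a.e.; (b) E[ξX*] = X₀; (c) λ₂·(ℙ(X* < L) - β) ≥ 0 with ℙ(X* < L) ≤ β. Then for every X ≥ 0 with E[ξX] ≤ X₀ and ℙ(X < L) ≤ β one has E[G(X)] ≤ E[G(X*)]. -/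
open Set MeasureTheory

/-!
Weak Lagrangian duality. Since `X*` maximizes `G x - λ ξ x - λ₂ 𝟙{x < L}` pointwise, integrating
gives `E[G(X)] - E[G(X*)] ≤ (λ E[ξX] + λ₂ ℙ(X < L)) - (λ E[ξX*] + λ₂ ℙ(X* < L))`. The budget and
chance constraints bound the penalty of `X` by `λ X₀ + λ₂ β`, and the binding budget together with
complementary slackness make this at most the penalty of `X*`.
-/

theorem ite_lt_eq_indicator {Ω : Type*} (Z : Ω → ℝ) (L c : ℝ) :
    (fun ω => if Z ω < L then c else 0) = {ω | Z ω < L}.indicator (fun _ => c) := by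
  ext ω
  simp only [indicator_apply, mem_ofPred_eq]

section

variable {Ω : Type*} [MeasurableSpace Ω] {μ : Measure Ω}

theorem aemeasurable_of_aemeasurable_mul {ξ Z : Ω → ℝ} (hξ : AEMeasurable ξ μ)
    (hξ_ne : ∀ᵐ ω ∂μ, ξ ω ≠ 0) (h : AEMeasurable (fun ω => ξ ω * Z ω) μ) :
    AEMeasurable Z μ := by
  refine (h.div hξ).congr ?_
  filter_upwards [hξ_ne] with ω hω
  exact mul_div_cancel_left₀ (Z ω) hω

theorem integrable_ite_lt [IsFiniteMeasure μ] {Z : Ω → ℝ} (hZ : AEMeasurable Z μ) (L c : ℝ) :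
    Integrable (fun ω => if Z ω < L then c else 0) μ := by
  rw [ite_lt_eq_indicator]
  exact (integrable_const c).indicator₀ (hZ.nullMeasurable measurableSet_Iio)

theorem integral_ite_lt {Z : Ω → ℝ} (hZ : AEMeasurable Z μ) (L c : ℝ) :
    ∫ ω, (if Z ω < L then c else 0) ∂μ = μ.real {ω | Z ω < L} * c := by
  have hs : NullMeasurableSet {ω | Z ω < L} μ := hZ.nullMeasurable measurableSet_Iio
  rw [ite_lt_eq_indicator, integral_indicator₀ hs, setIntegral_const, smul_eq_mul]

theorem integral_le_integral_of_ae_sub_le_sub {f f' c c' : Ω → ℝ} (hf : Integrable f μ)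
    (hf' : Integrable f' μ) (hc : Integrable c μ) (hc' : Integrable c' μ)
    (h : ∀ᵐ ω ∂μ, f ω - c ω ≤ f' ω - c' ω) (hcc' : ∫ ω, c ω ∂μ ≤ ∫ ω, c' ω ∂μ) :
    ∫ ω, f ω ∂μ ≤ ∫ ω, f' ω ∂μ := by
  have hsub : ∫ ω, f ω - c ω ∂μ ≤ ∫ ω, f' ω - c' ω ∂μ :=
    integral_mono_ae (hf.sub hc) (hf'.sub hc') h
  rw [integral_sub hf hc, integral_sub hf' hc'] at hsub
  linarith

end

theorem verification_lemma_VaR_general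
    {Ω : Type*} [MeasurableSpace Ω] (μ : Measure Ω) [IsProbabilityMeasure μ]
    (ξ Xstar : Ω → ℝ) (G : ℝ → ℝ) (lam lam₂ X₀ L β : ℝ)
    (hξpos : ∀ᵐ ω ∂μ, 0 < ξ ω) (hξint : Integrable ξ μ)
    (hlam : 0 < lam) (hlam₂ : 0 ≤ lam₂)
    (hmax : ∀ᵐ ω ∂μ, ∀ x ≥ (0:ℝ),
      G x - lam * ξ ω * x - (if x < L then lam₂ else 0) ≤
        G (Xstar ω) - lam * ξ ω * Xstar ω - (if Xstar ω < L then lam₂ else 0))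
    (hbudget_star : ∫ ω, ξ ω * Xstar ω ∂μ = X₀)
    (hslack : lam₂ * ((μ {ω | Xstar ω < L}).toReal - β) ≥ 0)
    (hint_star : Integrable (fun ω => G (Xstar ω)) μ)
    (hint_star' : Integrable (fun ω => ξ ω * Xstar ω) μ) :
    ∀ X : Ω → ℝ, (∀ᵐ ω ∂μ, 0 ≤ X ω) →
      Integrable (fun ω => G (X ω)) μ →
      Integrable (fun ω => ξ ω * X ω) μ →
      ∫ ω, ξ ω * X ω ∂μ ≤ X₀ →
      (μ {ω | X ω < L}).toReal ≤ β →
      ∫ ω, G (X ω) ∂μ ≤ ∫ ω, G (Xstar ω) ∂μ := by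
  intro X hX_nonneg hint_GX hint_ξX hbudget hVaR
  have hξ_ne : ∀ᵐ ω ∂μ, ξ ω ≠ 0 := hξpos.mono fun _ h => h.ne'
  have hX := aemeasurable_of_aemeasurable_mul hξint.aemeasurable hξ_ne hint_ξX.aemeasurable
  have hXstar := aemeasurable_of_aemeasurable_mul hξint.aemeasurable hξ_ne hint_star'.aemeasurable
  refine integral_le_integral_of_ae_sub_le_sub
    (c := fun ω => lam * (ξ ω * X ω) + if X ω < L then lam₂ else 0)
    (c' := fun ω => lam * (ξ ω * Xstar ω) + if Xstar ω < L then lam₂ else 0) hint_GX hint_star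
    ((hint_ξX.const_mul lam).add (integrable_ite_lt hX L lam₂))
    ((hint_star'.const_mul lam).add (integrable_ite_lt hXstar L lam₂)) ?_ ?_
  · filter_upwards [hmax, hX_nonneg] with ω hω hXω
    linarith [hω (X ω) hXω, mul_assoc lam (ξ ω) (X ω), mul_assoc lam (ξ ω) (Xstar ω)]
  · rw [integral_add (hint_ξX.const_mul lam) (integrable_ite_lt hX L lam₂),
      integral_add (hint_star'.const_mul lam) (integrable_ite_lt hXstar L lam₂),
      integral_const_mul, integral_const_mul, integral_ite_lt hX, integral_ite_lt hXstar,
      hbudget_star, measureReal_def, measureReal_def]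
    linarith [mul_le_mul_of_nonneg_left hbudget hlam.le, mul_le_mul_of_nonneg_right hVaR hlam₂]

/-- Verification lemma with an additional VaR (chance) constraint:
with multiplier `lam₂ ≥ 0` on the indicator of default and complementary
slackness, the a.e. pointwise maximizer `X*` of the extended Lagrangian is
optimal among all budget-feasible wealths satisfying `ℙ(X < L) ≤ β`. -/
theorem verification_lemma_VaR
    {Ω : Type*} [MeasurableSpace Ω] (μ : Measure Ω) [IsProbabilityMeasure μ]
    (ξ Xstar : Ω → ℝ) (G : ℝ → ℝ) (lam lam₂ X₀ L β : ℝ)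
    (hG : Measurable G)
    (hξpos : ∀ᵐ ω ∂μ, 0 < ξ ω) (hξint : Integrable ξ μ)
    (hlam : 0 < lam) (hlam₂ : 0 ≤ lam₂) (hX₀ : 0 < X₀) (hL : 0 < L)
    (hβ : β ∈ Ioo (0:ℝ) 1)
    (hXstar_nonneg : ∀ᵐ ω ∂μ, 0 ≤ Xstar ω)
    (hmax : ∀ᵐ ω ∂μ, ∀ x ≥ (0:ℝ),
      G x - lam * ξ ω * x - (if x < L then lam₂ else 0) ≤
        G (Xstar ω) - lam * ξ ω * Xstar ω - (if Xstar ω < L then lam₂ else 0))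
    (hbudget_star : ∫ ω, ξ ω * Xstar ω ∂μ = X₀)
    (hVaR_star : (μ {ω | Xstar ω < L}).toReal ≤ β)
    (hslack : lam₂ * ((μ {ω | Xstar ω < L}).toReal - β) ≥ 0)
    (hint_star : Integrable (fun ω => G (Xstar ω)) μ)
    (hint_star' : Integrable (fun ω => ξ ω * Xstar ω) μ) :
    ∀ X : Ω → ℝ, (∀ᵐ ω ∂μ, 0 ≤ X ω) →
      Integrable (fun ω => G (X ω)) μ →
      Integrable (fun ω => ξ ω * X ω) μ →
      ∫ ω, ξ ω * X ω ∂μ ≤ X₀ →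
      (μ {ω | X ω < L}).toReal ≤ β →
      ∫ ω, G (X ω) ∂μ ≤ ∫ ω, G (Xstar ω) ∂μ :=
  verification_lemma_VaR_general μ ξ Xstar G lam lam₂ X₀ L β hξpos hξint hlam hlam₂ hmax
    hbudget_star hslack hint_star hint_star'
end

section
/- The concave envelope of the derived utility is affine on the concavified region: Let G : [0,∞) → ℝ be continuous with G(0) = -q, G(x) = U(x - L) for x ∈ [L, L̃] (U strictly increasing, strictly concave, differentiable), and suppose ŷ ∈ (L, L̃) satisfies U(ŷ-L) - U'(ŷ-L)·ŷ + q = 0 and G(x) ≤ U'(ŷ-L)·x - q for all x ∈ [0, ŷ] (tangent-line domination on the concavified region). Then the function G** defined by G**(x) := U'(ŷ-L)·x - q for x ∈ [0, ŷ] and G**(x) := G(x) for x ≥ ŷ is concave on [0, L̃], dominates G, and is the smallest such function on [0, L̃]: any concave H ≥ G on [0, L̃] satisfies H ≥ G** on [0, L̃]. -/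
/-!
Beyond the tangency point `ŷ` the candidate envelope is `U (· - L)`, which is concave and lies
below its tangent line at `ŷ`; the tangency condition says that this tangent line passes through
`(0, -q)`, and `G**` continues `U (· - L)` to the left by exactly that line. Gluing a concave
function to its own tangent line keeps it concave, and `G ≤ G**` on `[0, ŷ]` is the domination
hypothesis. Conversely, a concave `H ≥ G` lies above its chord between `0` and `ŷ`, which lies
above the chord of `G` through `(0, -q)` and `(ŷ, G ŷ)`: that chord is the tangent line.
-/

open Set

lemma ConcaveOn.le_tangent_of_hasDerivAt {S : Set ℝ} {f : ℝ → ℝ} {f' x y : ℝ}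
    (hf : ConcaveOn ℝ S f) (hx : x ∈ S) (hy : y ∈ S) (hf' : HasDerivAt f f' x) :
    f y ≤ f x + f' * (y - x) := by
  rcases lt_trichotomy x y with hxy | rfl | hyx
  · have h := hf.slope_le_of_hasDerivAt hx hy hxy hf'
    rw [slope_def_field, div_le_iff₀ (sub_pos.2 hxy)] at h
    linarith
  · simp
  · have h := hf.le_slope_of_hasDerivAt hy hx hyx hf'
    rw [slope_def_field, le_div_iff₀ (sub_pos.2 hyx)] at h
    linarith

lemma concaveOn_Icc_ite_tangent {f : ℝ → ℝ} {a b c k : ℝ} (hf : ConcaveOn ℝ (Icc c b) f)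
    (htan : ∀ x ∈ Icc c b, f x ≤ f c + k * (x - c)) :
    ConcaveOn ℝ (Icc a b) (fun x => if x ≤ c then f c + k * (x - c) else f x) := by
  refine concaveOn_of_slope_anti_adjacent (convex_Icc a b) fun {x y z} hx hz hxy hyz => ?_
  have hxy' := sub_pos.2 hxy
  have hyz' := sub_pos.2 hyz
  rcases le_or_gt z c with hzc | hcz
  · simp only [if_pos hzc, if_pos (hyz.le.trans hzc), if_pos ((hxy.trans hyz).le.trans hzc)]
    rw [div_le_div_iff₀ hyz' hxy']
    exact le_of_eq (by ring)
  rcases lt_or_ge c x with hcx | hxc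
  · simp only [if_neg (not_le.2 hcx), if_neg (not_le.2 (hcx.trans hxy)),
      if_neg (not_le.2 hcz)]
    exact hf.slope_anti_adjacent ⟨hcx.le, hx.2⟩ ⟨hcz.le, hz.2⟩ hxy hyz
  simp only [if_pos hxc, if_neg (not_le.2 hcz)]
  split_ifs with hyc
  · have hzt := htan z ⟨hcz.le, hz.2⟩
    rw [div_le_div_iff₀ hyz' hxy']
    nlinarith [mul_le_mul_of_nonneg_right hzt hxy'.le]
  · have hcy : c < y := not_le.1 hyc
    have hyt := htan y ⟨hcy.le, hyz.le.trans hz.2⟩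
    -- the secant over `[x, y]` averages the slope `k` with the secant over `[c, y]`, which is `≤ k`
    calc (f z - f y) / (z - y) ≤ (f y - f c) / (y - c) :=
          hf.slope_anti_adjacent ⟨le_rfl, hcz.le.trans hz.2⟩ ⟨hcz.le, hz.2⟩ hcy hyz
      _ ≤ (f y - (f c + k * (x - c))) / (y - x) := by
          rw [div_le_div_iff₀ (sub_pos.2 hcy) hxy']
          nlinarith [mul_nonneg (sub_nonneg.2 hxc) (sub_nonneg.2 hyt)]

lemma ConcaveOn.affine_le_of_mem_Icc {s : Set ℝ} {H : ℝ → ℝ} {a b m p x : ℝ}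
    (hH : ConcaveOn ℝ s H) (ha : a ∈ s) (hb : b ∈ s) (hHa : m * a + p ≤ H a)
    (hHb : m * b + p ≤ H b) (hx : x ∈ Icc a b) : m * x + p ≤ H x := by
  rw [← segment_eq_Icc (hx.1.trans hx.2)] at hx
  obtain ⟨θ, μ, hθ, hμ, hθμ, rfl⟩ := hx
  have hcomb := hH.2 ha hb hθ hμ hθμ
  simp only [smul_eq_mul] at hcomb ⊢
  calc m * (θ * a + μ * b) + p = θ * (m * a + p) + μ * (m * b + p) := by
        linear_combination p * hθμ.symm
    _ ≤ θ * H a + μ * H b := by gcongr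
    _ ≤ H (θ * a + μ * b) := hcomb

lemma ite_tangent_le_of_concaveOn {f H : ℝ → ℝ} {a b c k : ℝ} (hH : ConcaveOn ℝ (Icc a b) H)
    (hfH : ∀ x ∈ Icc a b, f x ≤ H x) (ha : f a = f c + k * (a - c)) (hcb : c ≤ b) :
    ∀ x ∈ Icc a b, (if x ≤ c then f c + k * (x - c) else f x) ≤ H x := by
  intro x hx
  split_ifs with hxc
  · have hc : c ∈ Icc a b := ⟨hx.1.trans hxc, hcb⟩
    have hHa := hfH a ⟨le_rfl, hc.1.trans hcb⟩
    have hHc := hfH c hc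
    have := hH.affine_le_of_mem_Icc (m := k) (p := f c - k * c) ⟨le_rfl, hc.1.trans hcb⟩ hc
      (by linarith) (by linarith) ⟨hx.1, hxc⟩
    linarith
  · exact hfH x hx

lemma ConcaveOn.comp_sub_const {s : Set ℝ} {f : ℝ → ℝ} (hf : ConcaveOn ℝ s f) (a : ℝ) :
    ConcaveOn ℝ ((· - a) ⁻¹' s) (fun x => f (x - a)) := by
  convert hf.translate_right (-a) using 1 <;> ext <;> simp [sub_eq_neg_add]

theorem concave_envelope_affine_on_concavified_region_general
    (G U U' : ℝ → ℝ) (L Lt q yhat : ℝ)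
    (hG0 : G 0 = -q)
    (hGU : ∀ x ∈ Icc L Lt, G x = U (x - L))
    (hUconc : StrictConcaveOn ℝ (Ioi 0) U)
    (hUderiv : ∀ x ∈ Ioi (0:ℝ), HasDerivAt U (U' x) x)
    (hyhat : yhat ∈ Ioo L Lt)
    (htangent : U (yhat - L) - U' (yhat - L) * yhat + q = 0)
    (hdom : ∀ x ∈ Icc 0 yhat, G x ≤ U' (yhat - L) * x - q) :
    let Gss : ℝ → ℝ := fun x => if x ≤ yhat then U' (yhat - L) * x - q else G x
    ConcaveOn ℝ (Icc 0 Lt) Gss ∧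
    (∀ x ∈ Icc 0 Lt, G x ≤ Gss x) ∧
    (∀ H : ℝ → ℝ, ConcaveOn ℝ (Icc 0 Lt) H → (∀ x ∈ Icc 0 Lt, G x ≤ H x) →
      ∀ x ∈ Icc 0 Lt, Gss x ≤ H x) := by
  intro Gss
  obtain ⟨hLy, hyLt⟩ := hyhat
  set k := U' (yhat - L)
  have hUshift := hUconc.concaveOn.comp_sub_const L
  have hderiv : HasDerivAt (fun x => U (x - L)) k yhat :=
    (hUderiv _ (sub_pos.2 hLy)).comp_sub_const yhat L
  have hUG : EqOn (fun x => U (x - L)) G (Icc yhat Lt) :=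
    fun x hx => (hGU x ⟨hLy.le.trans hx.1, hx.2⟩).symm
  have hyIcc : yhat ∈ Icc yhat Lt := ⟨le_rfl, hyLt.le⟩
  have hGy : G yhat = k * yhat - q := by rw [← hUG hyIcc]; linarith
  have hright : Icc yhat Lt ⊆ (· - L) ⁻¹' Ioi 0 := fun x hx => sub_pos.2 (hLy.trans_le hx.1)
  have hGconc : ConcaveOn ℝ (Icc yhat Lt) G := (hUshift.subset hright (convex_Icc _ _)).congr hUG
  have htan : ∀ x ∈ Icc yhat Lt, G x ≤ G yhat + k * (x - yhat) := fun x hx => by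
    rw [← hUG hx, ← hUG hyIcc]
    exact hUshift.le_tangent_of_hasDerivAt (hright hyIcc) (hright hx) hderiv
  have hGss : Gss = fun x => if x ≤ yhat then G yhat + k * (x - yhat) else G x := by
    funext x; simp only [Gss, hGy]; split_ifs <;> ring
  rw [hGss]
  refine ⟨concaveOn_Icc_ite_tangent hGconc htan, fun x hx => ?_,
    fun H hH hGH => ite_tangent_le_of_concaveOn hH hGH (by rw [hG0, hGy]; ring) hyLt.le⟩
  dsimp only
  split_ifs with h
  · linarith [hdom x ⟨hx.1, h⟩]
  · exact le_rfl

/-- The concave envelope of the derived utility is affine on the concavified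
region `[0, yhat]` and coincides with `G` beyond the tangency point; it is the
smallest concave function on `[0, Lt]` dominating `G`. -/
theorem concave_envelope_affine_on_concavified_region
    (G U U' : ℝ → ℝ) (L Lt q yhat : ℝ)
    (hL : 0 < L) (hLLt : L < Lt) (hq : 0 ≤ q)
    (hGcont : ContinuousOn G (Ici 0))
    (hG0 : G 0 = -q)
    (hGU : ∀ x ∈ Icc L Lt, G x = U (x - L))
    (hUmono : StrictMonoOn U (Ioi 0))
    (hUconc : StrictConcaveOn ℝ (Ioi 0) U)
    (hUderiv : ∀ x ∈ Ioi (0:ℝ), HasDerivAt U (U' x) x)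
    (hyhat : yhat ∈ Ioo L Lt)
    (htangent : U (yhat - L) - U' (yhat - L) * yhat + q = 0)
    (hdom : ∀ x ∈ Icc 0 yhat, G x ≤ U' (yhat - L) * x - q) :
    let Gss : ℝ → ℝ := fun x => if x ≤ yhat then U' (yhat - L) * x - q else G x
    ConcaveOn ℝ (Icc 0 Lt) Gss ∧
    (∀ x ∈ Icc 0 Lt, G x ≤ Gss x) ∧
    (∀ H : ℝ → ℝ, ConcaveOn ℝ (Icc 0 Lt) H → (∀ x ∈ Icc 0 Lt, G x ≤ H x) →
      ∀ x ∈ Icc 0 Lt, Gss x ≤ H x) :=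
  concave_envelope_affine_on_concavified_region_general G U U' L Lt q yhat hG0 hGU hUconc hUderiv
    hyhat htangent hdom
end
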